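/- arXiv:1210.4937 — 3 statements merged into one kernel-verified Lean document; each statement's English description precedes it below -/
import Mathlib

section
/- Let A : ℕ → Bool be a sequence that is not computable, and let B : ℕ → Bool be its Walsh–Hadamard encoding. Then B is absolutely undecidable: there is no partial computable function φ : ℕ →. Bool whose domain has positive upper density and which B extends. -/
/-- The upper density of a set of naturals:
`ρ(D) = limsup_{n→∞} |D ∩ {0,…,n−1}| / n`. -/
noncomputable def upperDensity (D : Set ℕ) : ℝ :=
  Filter.limsup (fun n => (Nat.card (D ∩ Set.Iio n : Set ℕ) : ℝ) / n) Filter.atTop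

/-- A sequence `A : ℕ → Bool` extends a partial function `φ : ℕ →. Bool`
if `A m = φ m` for every `m` in the domain of `φ`. -/
def SeqExtends (A : ℕ → Bool) (φ : ℕ →. Bool) : Prop :=
  ∀ m, ∀ b ∈ φ m, A m = b

/-- A Boolean identified with an element of `ℤ/2`. -/
def boolToZMod2 (b : Bool) : ZMod 2 := if b then 1 else 0

/-- The Walsh–Hadamard encoding of a sequence `A : ℕ → Bool`:
`B 0 = false`, and for `n ≥ 1` written uniquely as `n = 2^k + j` with `j < 2^k`
(so `k = Nat.log 2 n` and `j = n - 2^k`),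
`B n = Σ_{i<k} A(i)·j_i (mod 2)` where `j_i` is the `i`-th binary digit of `j`. -/
def walshHadamard (A : ℕ → Bool) (n : ℕ) : Bool :=
  if n = 0 then false
  else
    decide ((∑ i ∈ Finset.range (Nat.log 2 n),
      boolToZMod2 (A i) * boolToZMod2 ((n - 2 ^ Nat.log 2 n).testBit i)) = 1)

/-!
Write the first `k` bits of `A` as the number `prefixCode A k < 2 ^ k`. On the dyadic block
`[2 ^ k, 2 ^ (k + 1))` the encoding is the Hadamard codeword of `prefixCode A k`, and distinct
Hadamard codewords are orthogonal as `±1`-vectors, so at most `C` of them agree with one another on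
`2 ^ k / C` given positions. Positive upper density provides, for arbitrarily large
`k`, blocks on which the domain of `φ` has that many points.

Running `φ` for `t` steps, the words of length `k` consistent with the values found on block `k`
form a computable list that always contains the true prefix and, at suitable `(k, t)`, has at most
`C` members. Choose `q` least such that for some `m₀`, at arbitrarily high levels `(k, t)`, at most
`q` listed words extend the first `m₀` bits of `A`. Minimality gives, for every `L`, such a level
where at least `q` listed words extend the first `L` bits of `A`. There the two sets of words
coincide, so any `τ` of length `L` extended by `q` listed words is the first `L` bits of `A`;
searching for such levels and `τ` computes `A` from the finite data `m₀`, `q` and the first `m₀`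
bits of `A`.
-/

open Finset

def prefixCode : (ℕ → Bool) → ℕ → ℕ
  | _, 0 => 0
  | X, k + 1 => Nat.bit (X 0) (prefixCode (fun i => X (i + 1)) k)

theorem testBit_prefixCode (X : ℕ → Bool) (k i : ℕ) :
    (prefixCode X k).testBit i = (decide (i < k) && X i) := by
  induction k generalizing X i with
  | zero => simp [prefixCode]
  | succ k ih =>
    cases i with
    | zero => simp [prefixCode]
    | succ i => simp [prefixCode, Nat.testBit_bit_succ, ih]

theorem prefixCode_lt_two_pow (X : ℕ → Bool) (k : ℕ) : prefixCode X k < 2 ^ k :=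
  Nat.lt_pow_two_of_testBit _ fun i hi => by simp [testBit_prefixCode, Nat.not_lt.2 hi]

theorem prefixCode_mod_two_pow (X : ℕ → Bool) {m k : ℕ} (h : m ≤ k) :
    prefixCode X k % 2 ^ m = prefixCode X m :=
  Nat.eq_of_testBit_eq fun i => by
    simp only [Nat.testBit_mod_two_pow, testBit_prefixCode]
    by_cases hi : i < m
    · simp [hi, hi.trans_le h]
    · simp [hi]

theorem Primrec.nat_pow : Primrec₂ ((· ^ ·) : ℕ → ℕ → ℕ) :=
  Primrec₂.unpaired'.1 Nat.Primrec.pow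

theorem Primrec.nat_testBit : Primrec₂ Nat.testBit :=
  (Primrec.eq.comp (nat_mod.comp (nat_div.comp fst (nat_pow.comp (const 2) snd)) (const 2))
    (const 1)).decide
    |>.of_eq fun _ => Nat.testBit_eq_decide_div_mod_eq.symm

theorem Primrec.card_filter_range {α : Type*} [Primcodable α] {f : α → ℕ} {p : α → ℕ → Prop}
    [∀ a, DecidablePred (p a)] (hf : Primrec f) (hp : PrimrecRel p) :
    Primrec fun a => #{i ∈ range (f a) | p a i} := by
  have := (PrimrecRel.listFilter hp.swap).comp (list_range.comp hf) Primrec.id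
  exact (list_length.comp this).of_eq fun a => rfl

def hadamardBit (k a j : ℕ) : Bool :=
  #{i ∈ range k | a.testBit i ∧ j.testBit i} % 2 = 1

def walshSign (k a j : ℕ) : ℤ :=
  ∏ i ∈ range k, if a.testBit i && j.testBit i then -1 else 1

theorem walshSign_eq_neg_one_pow (k a j : ℕ) :
    walshSign k a j = (-1) ^ #{i ∈ range k | a.testBit i ∧ j.testBit i} := by
  rw [walshSign, prod_ite, prod_const_one, mul_one, prod_const]
  simp only [Bool.and_eq_true]

theorem walshSign_eq_of_hadamardBit_eq {k a a' j : ℕ}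
    (h : hadamardBit k a j = hadamardBit k a' j) : walshSign k a j = walshSign k a' j := by
  simp only [hadamardBit, decide_eq_decide] at h
  rw [walshSign_eq_neg_one_pow, walshSign_eq_neg_one_pow, neg_one_pow_eq_pow_mod_two,
    neg_one_pow_eq_pow_mod_two (n := #{i ∈ range k | a'.testBit i ∧ j.testBit i})]
  congr 1
  omega

theorem walshSign_mul_self (k a j : ℕ) : walshSign k a j * walshSign k a j = 1 := by
  rw [walshSign, ← prod_mul_distrib]
  exact prod_eq_one fun i _ => by split_ifs <;> norm_num

theorem walshSign_mul (k a a' j : ℕ) :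
    walshSign k a j * walshSign k a' j = walshSign k (a ^^^ a') j := by
  rw [walshSign, walshSign, walshSign, ← prod_mul_distrib]
  refine prod_congr rfl fun i _ => ?_
  rw [Nat.testBit_xor]
  cases a.testBit i <;> cases a'.testBit i <;> cases j.testBit i <;> simp

theorem walshSign_xor_two_pow {k d i : ℕ} (hd : d.testBit i) (hik : i < k) (j : ℕ) :
    walshSign k d (j ^^^ 2 ^ i) = -walshSign k d j := by
  have hi : i ∈ range k := mem_range.2 hik
  rw [walshSign, walshSign, ← mul_prod_erase _ _ hi, ← mul_prod_erase _ _ hi]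
  have hrest : ∀ i' ∈ (range k).erase i,
      (if d.testBit i' && (j ^^^ 2 ^ i).testBit i' then (-1 : ℤ) else 1) =
        if d.testBit i' && j.testBit i' then -1 else 1 := fun i' hi' => by
    rw [Nat.testBit_xor, Nat.testBit_two_pow_of_ne (ne_of_mem_erase hi').symm, Bool.xor_false]
  rw [prod_congr rfl hrest, Nat.testBit_xor, Nat.testBit_two_pow_self, hd]
  cases j.testBit i <;> simp

theorem sum_walshSign_eq_zero {k d : ℕ} (hd₀ : d ≠ 0) (hd : d < 2 ^ k) :
    ∑ j ∈ range (2 ^ k), walshSign k d j = 0 := by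
  obtain ⟨i, hi⟩ := Nat.exists_testBit_of_ne_zero hd₀
  have hik : i < k := by
    by_contra! hki
    rw [Nat.testBit_lt_two_pow (hd.trans_le (Nat.pow_le_pow_right two_pos hki))] at hi
    exact Bool.false_ne_true hi
  refine sum_involution (fun j _ => j ^^^ 2 ^ i) (fun j _ => ?_) (fun j _ _ hj => ?_)
    (fun j hj => ?_) (fun j _ => ?_)
  · rw [walshSign_xor_two_pow hi hik, add_neg_cancel]
  · have := congrArg (Nat.testBit · i) hj
    simp [Nat.testBit_xor, Nat.testBit_two_pow_self] at this
  · exact mem_range.2 (Nat.xor_lt_two_pow (mem_range.1 hj) (Nat.pow_lt_pow_right one_lt_two hik))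
  · simp

theorem sum_walshSign_mul_walshSign {k a a' : ℕ} (ha : a < 2 ^ k) (ha' : a' < 2 ^ k) :
    ∑ j ∈ range (2 ^ k), walshSign k a j * walshSign k a' j = if a = a' then 2 ^ k else 0 := by
  split_ifs with h
  · subst h
    simp [walshSign_mul_self]
  · simp only [walshSign_mul]
    exact sum_walshSign_eq_zero (by simpa using h)
      (Nat.xor_lt_two_pow ha ha')

theorem card_mul_card_le_of_hadamardBit_eq {k : ℕ} {S L : Finset ℕ} (hS : S ⊆ range (2 ^ k))
    (hL : L ⊆ range (2 ^ k))
    (h : ∀ a ∈ L, ∀ a' ∈ L, ∀ j ∈ S, hadamardBit k a j = hadamardBit k a' j) :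
    #L * #S ≤ 2 ^ k := by
  rcases L.eq_empty_or_nonempty with rfl | ⟨a₀, ha₀⟩
  · simp
  set F : ℕ → ℤ := fun j => ∑ a ∈ L, walshSign k a j
  have htotal : ∑ j ∈ range (2 ^ k), F j * F j = #L * 2 ^ k := by
    calc ∑ j ∈ range (2 ^ k), F j * F j
        = ∑ a ∈ L, ∑ a' ∈ L, ∑ j ∈ range (2 ^ k), walshSign k a j * walshSign k a' j := by
          simp only [F, sum_mul_sum]
          rw [sum_comm]
          exact sum_congr rfl fun a _ => sum_comm
      _ = ∑ a ∈ L, (2 : ℤ) ^ k := sum_congr rfl fun a ha => by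
          rw [sum_congr rfl fun a' ha' =>
            sum_walshSign_mul_walshSign (mem_range.1 (hL ha)) (mem_range.1 (hL ha'))]
          simp [ha]
      _ = #L * 2 ^ k := by simp
  have hF : ∀ j ∈ S, F j = #L * walshSign k a₀ j := fun j hj => by
    simp only [F]
    rw [sum_congr rfl fun a ha => walshSign_eq_of_hadamardBit_eq (h a ha a₀ ha₀ j hj)]
    simp
  have hpartial : ∑ j ∈ S, F j * F j = #L * #L * #S := by
    rw [sum_congr rfl fun j hj => by rw [hF j hj, mul_mul_mul_comm, walshSign_mul_self, mul_one]]
    simp [mul_comm]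
  have hle : (#L : ℤ) * (#L * #S) ≤ #L * 2 ^ k :=
    calc (#L : ℤ) * (#L * #S) = ∑ j ∈ S, F j * F j := by rw [hpartial, mul_assoc]
      _ ≤ ∑ j ∈ range (2 ^ k), F j * F j :=
        sum_le_sum_of_subset_of_nonneg hS fun j _ _ => mul_self_nonneg _
      _ = #L * 2 ^ k := htotal
  exact_mod_cast le_of_mul_le_mul_left hle (by exact_mod_cast card_pos.2 ⟨a₀, ha₀⟩)

section density

variable (D : Set ℕ)

theorem upperDensity_le_of_eventually_le {b : ℝ}
    (h : ∀ᶠ n in Filter.atTop, (Nat.card (D ∩ Set.Iio n : Set ℕ) : ℝ) ≤ b * n) :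
    upperDensity D ≤ b := by
  refine Filter.limsup_le_of_le (Filter.isCoboundedUnder_le_of_le _ fun n => by positivity) ?_
  filter_upwards [h, Filter.eventually_gt_atTop 0] with n hn hn₀
  rwa [div_le_iff₀ (by exact_mod_cast hn₀)]

variable [DecidablePred (· ∈ D)]

def dyadicBlockCount (k : ℕ) : ℕ := #{j ∈ range (2 ^ k) | 2 ^ k + j ∈ D}

theorem natCard_inter_Iio (n : ℕ) : Nat.card (D ∩ Set.Iio n : Set ℕ) = #{i ∈ range n | i ∈ D} := by
  have : D ∩ Set.Iio n = ↑{i ∈ range n | i ∈ D} := by ext; simp [and_comm]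
  rw [this, Nat.card_coe_set_eq, Set.ncard_coe_finset]

theorem card_filter_range_two_pow_succ_le (M : ℕ) :
    #{i ∈ range (2 ^ (M + 1)) | i ∈ D} ≤ #{i ∈ range (2 ^ M) | i ∈ D} + dyadicBlockCount D M := by
  rw [pow_succ, mul_two, range_add, filter_union, filter_map]
  exact (card_union_le _ _).trans_eq (by rw [card_map]; rfl)

variable {D}

theorem mul_card_filter_range_two_pow_le {C k₀ : ℕ}
    (h : ∀ k ≥ k₀, C * dyadicBlockCount D k ≤ 2 ^ k) (M : ℕ) :
    C * #{i ∈ range (2 ^ M) | i ∈ D} ≤ C * 2 ^ k₀ + 2 ^ M := by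
  induction M with
  | zero =>
    have := Nat.mul_le_mul_left C
      (((card_filter_le (range 1) (· ∈ D)).trans_eq (card_range 1)).trans
        (Nat.one_le_two_pow (n := k₀)))
    simpa using this.trans (Nat.le_add_right _ 1)
  | succ M ih =>
    rcases le_or_gt k₀ M with hM | hM
    · have := Nat.mul_le_mul_left C (card_filter_range_two_pow_succ_le D M)
      rw [mul_add] at this
      have := h M hM
      have := pow_succ 2 M
      omega
    · refine (Nat.mul_le_mul_left C ?_).trans (Nat.le_add_right _ _)
      exact ((card_filter_le _ (· ∈ D)).trans_eq (card_range _)).trans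
        (Nat.pow_le_pow_right two_pos hM)

theorem mul_card_filter_range_le {C k₀ : ℕ} (h : ∀ k ≥ k₀, C * dyadicBlockCount D k ≤ 2 ^ k)
    (n : ℕ) : C * #{i ∈ range n | i ∈ D} ≤ C * 2 ^ k₀ + 2 * n := by
  rcases n.eq_zero_or_pos with rfl | hn
  · simp
  have hlt : n ≤ 2 ^ (Nat.log 2 n + 1) := (Nat.lt_pow_succ_log_self one_lt_two n).le
  have hle : 2 ^ (Nat.log 2 n + 1) ≤ 2 * n := by
    rw [pow_succ, mul_comm]
    exact Nat.mul_le_mul_left 2 (Nat.pow_log_le_self 2 hn.ne')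
  have hmono := card_le_card (filter_subset_filter (· ∈ D) (range_subset_range.2 hlt))
  exact (Nat.mul_le_mul_left C hmono).trans
    ((mul_card_filter_range_two_pow_le h _).trans (by omega))

variable (D)

theorem exists_frequently_dense_dyadicBlock (hD : 0 < upperDensity D) :
    ∃ C, ∀ k₀, ∃ k ≥ k₀, 2 ^ k ≤ C * dyadicBlockCount D k := by
  obtain ⟨C, hC⟩ := exists_nat_gt (3 / upperDensity D)
  have hC₀ : (0 : ℝ) < C := (div_pos three_pos hD).trans hC
  refine ⟨C, fun k₀ => ?_⟩
  by_contra! hsparse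
  have hcount := mul_card_filter_range_le (fun k hk => (hsparse k hk).le)
  have : upperDensity D ≤ 3 / C := by
    refine upperDensity_le_of_eventually_le D ?_
    filter_upwards [Filter.eventually_ge_atTop (C * 2 ^ k₀)] with n hn
    rw [natCard_inter_Iio, div_mul_eq_mul_div, le_div_iff₀' hC₀]
    exact_mod_cast (hcount n).trans (by omega)
  exact this.not_gt ((div_lt_comm₀ hD hC₀).1 hC)

end density

open Nat.Partrec in
theorem Partrec.exists_primrec_approx {β : Type*} [Primcodable β] {φ : ℕ →. β}
    (hφ : Partrec φ) :
    ∃ f : ℕ → ℕ → Option β, Primrec₂ f ∧ (∀ t n b, f t n = some b → b ∈ φ n) ∧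
      ∀ n, ∀ b ∈ φ n, ∀ᶠ t in Filter.atTop, f t n = some b := by
  obtain ⟨c, hc⟩ := Code.exists_code.1
    (Partrec.nat_iff.1 (hφ.map (Computable.encode.comp Computable.snd).to₂))
  refine ⟨fun t n => (Code.evaln t c n).bind Encodable.decode,
    Primrec.option_bind (Code.primrec_evaln.comp ((Primrec.fst.pair (Primrec.const c)).pair
      Primrec.snd)) (Primrec.decode.comp Primrec.snd).to₂, fun t n b hb => ?_, fun n b hb => ?_⟩
  · obtain ⟨v, hv, hvb⟩ := Option.bind_eq_some_iff.1 hb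
    have := Code.evaln_sound hv
    rw [hc] at this
    obtain ⟨b', hb', rfl⟩ := (Part.mem_map_iff _).1 this
    rw [Encodable.encodek] at hvb
    exact Option.some_injective _ hvb ▸ hb'
  · have : Encodable.encode b ∈ c.eval n := by
      rw [hc]
      exact Part.mem_map _ hb
    obtain ⟨t₀, ht₀⟩ := Code.evaln_complete.1 this
    filter_upwards [Filter.eventually_ge_atTop t₀] with t ht
    rw [Option.mem_def.1 (Code.evaln_mono ht ht₀), Option.bind_some, Encodable.encodek]

theorem exists_stage_dyadicBlockCount_le {β : Type*} {φ : ℕ →. β}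
    [DecidablePred (· ∈ φ.Dom)] {f : ℕ → ℕ → Option β}
    (hf : ∀ n, ∀ b ∈ φ n, ∀ᶠ t in Filter.atTop, f t n = some b) (k : ℕ) :
    ∃ t, dyadicBlockCount φ.Dom k ≤ #{j ∈ range (2 ^ k) | (f t (2 ^ k + j)).isSome} := by
  obtain ⟨t, ht⟩ := ((Filter.eventually_all_finset {j ∈ range (2 ^ k) | 2 ^ k + j ∈ φ.Dom}).2
    fun j hj => (hf _ _ (Part.get_mem (mem_filter.1 hj).2)).mono
      fun t h => Option.isSome_iff_exists.2 ⟨_, h⟩).exists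
  exact ⟨t, card_le_card (monotone_filter_right _ fun j hj hdom => ht j (mem_filter.2 ⟨hj, hdom⟩))⟩

theorem exists_stable_level {ι : Type*} (g : ℕ → ℕ → ι → ℕ)
    (hpos : ∀ m k i, m ≤ k → 0 < g m k i) (hbdd : ∃ m q, ∀ L, ∃ k ≥ L, ∃ i, g m k i ≤ q) :
    ∃ m₀ q, ∀ L, ∃ k ≥ L, ∃ i, g m₀ k i ≤ q ∧ q ≤ g L k i := by
  classical
  have hex : ∃ q m, ∀ L, ∃ k ≥ L, ∃ i, g m k i ≤ q :=
    let ⟨m, q, h⟩ := hbdd; ⟨q, m, h⟩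
  obtain ⟨m₀, hm₀⟩ := Nat.find_spec hex
  refine ⟨m₀, Nat.find hex, fun L => ?_⟩
  by_contra! hdrop
  have hq : 0 < Nat.find hex := by
    obtain ⟨k, hk, i, hi⟩ := hm₀ m₀
    exact (hpos _ _ _ hk).trans_le hi
  -- `Nat.find hex` is the least bound respected by some `g m` at arbitrarily high levels; failure
  -- at `L` would make `g L` respect a smaller one.
  refine Nat.find_min hex (Nat.sub_one_lt hq.ne') ⟨L, fun L' => ?_⟩
  obtain ⟨k, hk, i, hi⟩ := hm₀ (max L L')
  exact ⟨k, le_of_max_le_right hk, i, Nat.le_sub_one_of_lt (hdrop k (le_of_max_le_left hk) i hi)⟩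

section candidates

variable (ok : ℕ → ℕ → ℕ → Prop) [∀ t k, DecidablePred (ok t k)]

def candidateCount (t k m σ : ℕ) : ℕ := #{a ∈ range (2 ^ k) | ok t k a ∧ a % 2 ^ m = σ}

variable {ok}

theorem Primrec.candidateCount {α : Type*} [Primcodable α] {ft fk fm fσ : α → ℕ}
    (hok : PrimrecPred fun p : ℕ × ℕ × ℕ => ok p.1 p.2.1 p.2.2) (ht : Primrec ft)
    (hk : Primrec fk) (hm : Primrec fm) (hσ : Primrec fσ) :
    Primrec fun a => _root_.candidateCount ok (ft a) (fk a) (fm a) (fσ a) :=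
  Primrec.card_filter_range (Primrec.nat_pow.comp (const 2) hk)
    (PrimrecPred.and (hok.comp ((ht.comp fst).pair ((hk.comp fst).pair snd)))
      (Primrec.eq.comp (nat_mod.comp snd (nat_pow.comp (const 2) (hm.comp fst))) (hσ.comp fst)))

theorem prefixCode_mem_candidates {X : ℕ → Bool} (hX : ∀ t k, ok t k (prefixCode X k))
    {t k m : ℕ} (hmk : m ≤ k) :
    prefixCode X k ∈ ({a ∈ range (2 ^ k) | ok t k a ∧ a % 2 ^ m = prefixCode X m} : Finset ℕ) :=
  mem_filter.2 ⟨mem_range.2 (prefixCode_lt_two_pow X k), hX t k, prefixCode_mod_two_pow X hmk⟩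

variable (ok) in
def IsCertificate (m₀ σ₀ q L k t τ : ℕ) : Prop :=
  m₀ ≤ L ∧ L ≤ k ∧ τ % 2 ^ m₀ = σ₀ ∧ candidateCount ok t k m₀ σ₀ ≤ q ∧
    q ≤ candidateCount ok t k L τ

instance (m₀ σ₀ q L k t τ : ℕ) : Decidable (IsCertificate ok m₀ σ₀ q L k t τ) := by
  unfold IsCertificate; infer_instance

theorem eq_prefixCode_of_isCertificate {X : ℕ → Bool} (hX : ∀ t k, ok t k (prefixCode X k))
    {m₀ q L k t τ : ℕ} (h : IsCertificate ok m₀ (prefixCode X m₀) q L k t τ) :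
    τ = prefixCode X L := by
  obtain ⟨hmL, hLk, hτ, hm, hL⟩ := h
  have hsub : ({a ∈ range (2 ^ k) | ok t k a ∧ a % 2 ^ L = τ} : Finset ℕ) ⊆
      {a ∈ range (2 ^ k) | ok t k a ∧ a % 2 ^ m₀ = prefixCode X m₀} := by
    refine monotone_filter_right _ fun a _ ha => ⟨ha.1, ?_⟩
    rw [← hτ, ← ha.2, Nat.mod_mod_of_dvd a (pow_dvd_pow 2 hmL)]
  have hmem := prefixCode_mem_candidates hX (t := t) (hmL.trans hLk)
  rw [← eq_of_subset_of_card_le hsub (hm.trans hL)] at hmem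
  rw [← (mem_filter.1 hmem).2.2, prefixCode_mod_two_pow X hLk]

theorem primrec_isCertificate (hok : PrimrecPred fun p : ℕ × ℕ × ℕ => ok p.1 p.2.1 p.2.2)
    (m₀ σ₀ q : ℕ) :
    PrimrecRel fun L (p : ℕ × ℕ × ℕ) => IsCertificate ok m₀ σ₀ q L p.1 p.2.1 p.2.2 := by
  open Primrec in
  have hk := fst.comp (snd (α := ℕ) (β := ℕ × ℕ × ℕ))
  have ht := fst.comp (snd.comp (snd (α := ℕ) (β := ℕ × ℕ × ℕ)))
  have hτ := snd.comp (snd.comp (snd (α := ℕ) (β := ℕ × ℕ × ℕ)))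
  exact (PrimrecPred.and (nat_le.comp (const m₀) fst) <| PrimrecPred.and (nat_le.comp fst hk) <|
    PrimrecPred.and (Primrec.eq.comp (nat_mod.comp hτ (const _)) (const σ₀)) <|
    PrimrecPred.and (nat_le.comp (Primrec.candidateCount hok ht hk (const m₀) (const σ₀))
      (const q)) (nat_le.comp (const q) (Primrec.candidateCount hok ht hk fst hτ))).of_eq
    fun _ => Iff.rfl

theorem computable_of_forall_exists_isCertificate
    (hok : PrimrecPred fun p : ℕ × ℕ × ℕ => ok p.1 p.2.1 p.2.2) {X : ℕ → Bool}
    (hX : ∀ t k, ok t k (prefixCode X k)) {m₀ q : ℕ}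
    (hcert : ∀ L ≥ m₀, ∃ k t, IsCertificate ok m₀ (prefixCode X m₀) q L k t (prefixCode X L)) :
    Computable X := by
  let f : ℕ → ℕ → Option Bool := fun n w =>
    (Option.guard (fun p => decide (IsCertificate ok m₀ (prefixCode X m₀) q (m₀ + 1 + n)
      p.1 p.2.1 p.2.2)) (Denumerable.ofNat (ℕ × ℕ × ℕ) w)).map fun p => p.2.2.testBit n
  have hf : Computable₂ f := by
    open Primrec in
    exact (option_map (option_guard ((primrec_isCertificate hok m₀ _ q).comp₂
      (nat_add.comp (const (m₀ + 1)) (fst.comp fst)).to₂ Primrec₂.right)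
      ((Primrec.ofNat _).comp snd))
      (nat_testBit.comp (snd.comp (snd.comp snd)) (fst.comp fst)).to₂).to_comp
  refine (Partrec.rfindOpt hf).of_eq fun n => ?_
  have hsound : ∀ w, ∀ b ∈ f n w, b = X n := by
    intro w b hb
    simp only [f, Option.mem_def, Option.map_eq_some_iff, Option.guard_apply] at hb
    obtain ⟨p, hp, rfl⟩ := hb
    split_ifs at hp with hp'
    cases hp
    rw [eq_prefixCode_of_isCertificate hX (of_decide_eq_true hp'), testBit_prefixCode]
    simp
  have hdom : (Nat.rfindOpt (f n)).Dom := by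
    obtain ⟨k, t, hkt⟩ := hcert (m₀ + 1 + n) (by omega)
    refine Nat.rfindOpt_dom.2 ⟨Encodable.encode (k, t, prefixCode X (m₀ + 1 + n)),
      (prefixCode X (m₀ + 1 + n)).testBit n, ?_⟩
    simp [f, Option.guard_apply, hkt]
  obtain ⟨w, hw⟩ := Nat.rfindOpt_spec (Part.get_mem hdom)
  have hget := Part.get_mem hdom
  rw [hsound w _ hw] at hget
  exact Part.eq_some_iff.2 hget

theorem computable_of_frequently_few_candidates
    (hok : PrimrecPred fun p : ℕ × ℕ × ℕ => ok p.1 p.2.1 p.2.2) {X : ℕ → Bool}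
    (hX : ∀ t k, ok t k (prefixCode X k))
    (hfew : ∃ C, ∀ k₀, ∃ k ≥ k₀, ∃ t, #{a ∈ range (2 ^ k) | ok t k a} ≤ C) :
    Computable X := by
  obtain ⟨C, hC⟩ := hfew
  obtain ⟨m₀, q, hstable⟩ := exists_stable_level
    (fun m k t => candidateCount ok t k m (prefixCode X m))
    (fun m k t hmk => card_pos.2 ⟨_, prefixCode_mem_candidates hX hmk⟩)
    ⟨0, C, fun L => let ⟨k, hk, t, ht⟩ := hC L
      ⟨k, hk, t, (card_le_card (monotone_filter_right _ fun _ _ h => h.1)).trans ht⟩⟩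
  refine computable_of_forall_exists_isCertificate (m₀ := m₀) (q := q) hok hX fun L hL => ?_
  obtain ⟨k, hk, t, hm₀, hL'⟩ := hstable L
  exact ⟨k, t, hL, hk, prefixCode_mod_two_pow X hL, hm₀, hL'⟩

end candidates

theorem walshHadamard_two_pow_add (A : ℕ → Bool) {k j : ℕ} (hj : j < 2 ^ k) :
    walshHadamard A (2 ^ k + j) = hadamardBit k (prefixCode A k) j := by
  have hlog : Nat.log 2 (2 ^ k + j) = k :=
    Nat.log_eq_of_pow_le_of_lt_pow (by omega) (by rw [pow_succ]; omega)
  have hsum : ∑ i ∈ range k, boolToZMod2 (A i) * boolToZMod2 (j.testBit i) =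
      (#{i ∈ range k | (prefixCode A k).testBit i ∧ j.testBit i} : ZMod 2) := by
    rw [natCast_card_filter]
    refine sum_congr rfl fun i hi => ?_
    rw [testBit_prefixCode, decide_eq_true (mem_range.1 hi), Bool.true_and]
    cases A i <;> cases j.testBit i <;> rfl
  rw [walshHadamard, if_neg (by positivity), hlog, Nat.add_sub_cancel_left, hadamardBit,
    decide_eq_decide, hsum, ZMod.natCast_eq_one_iff_odd, Nat.odd_iff]

theorem Primrec.hadamardBit {α : Type*} [Primcodable α] {fk fa fj : α → ℕ} (hk : Primrec fk)
    (ha : Primrec fa) (hj : Primrec fj) :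
    Primrec fun x => _root_.hadamardBit (fk x) (fa x) (fj x) :=
  (Primrec.eq.comp (nat_mod.comp (card_filter_range hk
    (p := fun x i => (fa x).testBit i ∧ (fj x).testBit i) (PrimrecPred.and
      (Primrec.eq.comp (nat_testBit.comp (ha.comp fst) snd) (const true))
      (Primrec.eq.comp (nat_testBit.comp (hj.comp fst) snd) (const true)))) (const 2))
    (const 1)).decide

def ConsistentAt (f : ℕ → ℕ → Option Bool) (t k a : ℕ) : Prop :=
  ∀ j < 2 ^ k, f t (2 ^ k + j) ≠ some (!hadamardBit k a j)

instance (f : ℕ → ℕ → Option Bool) (t k : ℕ) : DecidablePred (ConsistentAt f t k) := fun _ => by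
  unfold ConsistentAt; infer_instance

theorem primrec_consistentAt {f : ℕ → ℕ → Option Bool} (hf : Primrec₂ f) :
    PrimrecPred fun p : ℕ × ℕ × ℕ => ConsistentAt f p.1 p.2.1 p.2.2 := by
  open Primrec in
  have hk := fst.comp (snd.comp (snd (α := ℕ) (β := ℕ × ℕ × ℕ)))
  have hrel : PrimrecRel fun j (p : ℕ × ℕ × ℕ) =>
      f p.1 (2 ^ p.2.1 + j) ≠ some (!_root_.hadamardBit p.2.1 p.2.2 j) :=
    PrimrecPred.not (Primrec.eq.comp (hf.comp (fst.comp snd) (nat_add.comp (nat_pow.comp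
      (const 2) hk) fst)) (option_some.comp (Primrec.not.comp
        (Primrec.hadamardBit hk (snd.comp (snd.comp snd)) fst))))
  exact (hrel.forall_mem_list.comp (list_range.comp (nat_pow.comp (const 2) (fst.comp snd)))
    Primrec.id).of_eq fun _ => by simp only [List.mem_range, ConsistentAt, id]

theorem card_consistentAt_mul_card_le (f : ℕ → ℕ → Option Bool) (t k : ℕ) :
    #{a ∈ range (2 ^ k) | ConsistentAt f t k a} *
      #{j ∈ range (2 ^ k) | (f t (2 ^ k + j)).isSome} ≤ 2 ^ k := by
  refine card_mul_card_le_of_hadamardBit_eq (filter_subset _ _) (filter_subset _ _)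
    fun a ha a' ha' j hj => ?_
  obtain ⟨hj, hsome⟩ := mem_filter.1 hj
  obtain ⟨b, hb⟩ := Option.isSome_iff_exists.1 hsome
  have h := (mem_filter.1 ha).2 j (mem_range.1 hj)
  have h' := (mem_filter.1 ha').2 j (mem_range.1 hj)
  rw [hb, ne_eq, Option.some_inj] at h h'
  cases b <;> simp_all

theorem consistentAt_prefixCode {A : ℕ → Bool} {φ : ℕ →. Bool} {f : ℕ → ℕ → Option Bool}
    (hf : ∀ t n b, f t n = some b → b ∈ φ n) (hA : SeqExtends (walshHadamard A) φ) (t k : ℕ) :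
    ConsistentAt f t k (prefixCode A k) := fun j hj h => by
  have := hA _ _ (hf _ _ _ h)
  rw [walshHadamard_two_pow_add A hj] at this
  simp at this

/-- If `A` is not computable, then its Walsh–Hadamard encoding `B` is absolutely
undecidable: no partial computable `φ : ℕ →. Bool` has domain of positive upper
density and is extended by `B`. -/
theorem walshHadamard_absolutelyUndecidable (A : ℕ → Bool) (hA : ¬ Computable A) :
    ¬ ∃ φ : ℕ →. Bool, Partrec φ ∧ 0 < upperDensity φ.Dom ∧
      SeqExtends (walshHadamard A) φ := by
  classical
  rintro ⟨φ, hφ, hρ, hext⟩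
  obtain ⟨f, hf, hsound, hcomplete⟩ := hφ.exists_primrec_approx
  obtain ⟨C, hC⟩ := exists_frequently_dense_dyadicBlock φ.Dom hρ
  refine hA (computable_of_frequently_few_candidates (primrec_consistentAt hf)
    (consistentAt_prefixCode hsound hext) ⟨C, fun k₀ => ?_⟩)
  obtain ⟨k, hk, hdense⟩ := hC k₀
  obtain ⟨t, hconv⟩ := exists_stage_dyadicBlockCount_le hcomplete k
  have hS := hdense.trans (Nat.mul_le_mul_left C hconv)
  refine ⟨k, hk, t, Nat.le_of_mul_le_mul_right ((card_consistentAt_mul_card_le f t k).trans hS)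
    (Nat.pos_of_ne_zero fun h0 => ?_)⟩
  rw [h0, mul_zero] at hS
  exact (Nat.two_pow_pos k).not_ge hS
end

section
/- A sequence A : ℕ → Bool is bi-immune if and only if there is no partial computable function φ : ℕ →. Bool with infinite domain that A extends. -/
/-- A sequence `A : ℕ → Bool` is bi-immune if no infinite computable set is
contained in `{n | A n = true}` or in `{n | A n = false}`. -/
def BiImmune (A : ℕ → Bool) : Prop :=
  ¬ ∃ D : Set ℕ, D.Infinite ∧ ComputablePred (· ∈ D) ∧
      (D ⊆ {n | A n = true} ∨ D ⊆ {n | A n = false})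

/-! An infinite c.e. set contains an infinite decidable subset: above each bound `N`, search for
an element together with a stage at which it is enumerated. Iterating this total search gives a
strictly increasing computable sequence, and the range of such a sequence is decidable. Applied to
an infinite fibre `{n | b ∈ φ n}` this yields a computable set on which `A` is constant.
Conversely, a computable set on which `A` is constantly `b` is the domain of the partial computable
function that is `b` there and undefined elsewhere. -/

open Nat.Partrec (Code)

section

variable {α σ : Type*} [Primcodable α] [Primcodable σ]

theorem Computable.iterate {g : α → α} (hg : Computable g) (a : α) :
    Computable fun n => g^[n] a :=
  (Computable.nat_rec Computable.id (Computable.const a)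
      ((hg.comp (Computable.snd.comp Computable.snd)).to₂ :
        Computable₂ fun (_ : ℕ) (q : ℕ × α) => g q.2)).of_eq fun n => by
    induction n with
    | zero => rfl
    | succ n ih => rw [Function.iterate_succ_apply', ← ih]; rfl

theorem REPred.exists_primrec_stage {p : α → Prop} (hp : REPred p) :
    ∃ q : ℕ → α → Bool, Primrec₂ q ∧ ∀ a, p a ↔ ∃ k, q k a = true := by
  obtain ⟨c, hc⟩ := Code.exists_code.1 hp
  refine ⟨fun k a => (Code.evaln k c (Encodable.encode a)).isSome, ?_, fun a => ?_⟩
  · exact Primrec.option_isSome.comp <| Code.primrec_evaln.comp <|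
      (Primrec.fst.pair (Primrec.const c)).pair (Primrec.encode.comp Primrec.snd)
  · have hdom : p a ↔ (Code.eval c (Encodable.encode a)).Dom := by
      simp only [hc, Encodable.encodek, Part.coe_some, Part.bind_some, Part.map_Dom]
      exact ⟨fun h => ⟨h, trivial⟩, fun ⟨h, _⟩ => h⟩
    simp only [hdom, Part.dom_iff_mem, Code.evaln_complete, Option.isSome_iff_exists,
      Option.mem_def]
    exact exists_comm

theorem Partrec.rePred_mem [DecidableEq σ] {φ : α →. σ} (hφ : Partrec φ) (b : σ) :
    REPred fun a => b ∈ φ a := by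
  have hsel : Computable₂ fun (_ : α) (x : σ) => if x = b then some () else Option.none :=
    (Primrec.ite (Primrec.eq.comp Primrec.snd (Primrec.const b)) (Primrec.const (some ()))
      (Primrec.const Option.none)).to_comp
  refine (hφ.bind (Computable.ofOption hsel).to₂).dom_re.of_eq fun a => ?_
  simp [Part.dom_iff_mem]

theorem REPred.partrec_assert_const {p : α → Prop} (hp : REPred p) (b : σ) :
    Partrec fun a => Part.assert (p a) fun _ => Part.some b :=
  (hp.map (Computable.const b).to₂).of_eq fun a => Part.ext fun c => by
    simp [Part.mem_assert_iff, eq_comm]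

end

theorem StrictMono.computablePred_mem_range {f : ℕ → ℕ} (hmono : StrictMono f)
    (hf : Computable f) : ComputablePred (· ∈ Set.range f) := by
  have hex : ∀ n, ∃ i, n ≤ f i := fun n => ⟨n, hmono.le_apply⟩
  have hg : Computable fun n => Nat.find (hex n) :=
    Computable.find (P := fun n i => n ≤ f i) (Computable.computablePred <|
      Primrec.nat_le.decide.to_comp.comp Computable.fst (hf.comp Computable.snd)) hex
  refine (Computable.computablePred <|
    Primrec.eq.decide.to_comp.comp (hf.comp hg) Computable.id).of_eq fun n => ?_
  refine ⟨fun h => ⟨_, h⟩, ?_⟩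
  rintro ⟨i, rfl⟩
  -- the least `j` with `f i ≤ f j` is `i` itself
  congr 1
  exact le_antisymm (Nat.find_min' _ le_rfl) (hmono.le_iff_le.1 (Nat.find_spec (hex (f i))))

theorem PFun.exists_infinite_fiber [Finite σ] {φ : α →. σ} (h : φ.Dom.Infinite) :
    ∃ b, {a | b ∈ φ a}.Infinite := by
  by_contra! hfin
  refine h ((Set.finite_iUnion hfin).subset fun a ha => ?_)
  exact Set.mem_iUnion.2 ⟨(φ a).get ha, Part.get_mem ha⟩

theorem exists_infinite_computablePred_subset_of_next {p : ℕ → Prop} {next : ℕ → ℕ}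
    (hnext : Computable next) (hlt : ∀ N, N < next N) (hp : ∀ N, p (next N)) :
    ∃ D ⊆ {n | p n}, D.Infinite ∧ ComputablePred (· ∈ D) := by
  have hmono : StrictMono fun i => next^[i + 1] 0 := strictMono_nat_of_lt_succ fun i => by
    rw [Function.iterate_succ_apply' next (i + 1)]
    exact hlt _
  refine ⟨Set.range fun i => next^[i + 1] 0, ?_, Set.infinite_range_of_injective hmono.injective,
    hmono.computablePred_mem_range ((hnext.iterate 0).comp Computable.succ)⟩
  rintro _ ⟨i, rfl⟩
  change p (next^[i + 1] 0)
  rw [Function.iterate_succ_apply']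
  exact hp _

theorem REPred.exists_infinite_computablePred_subset {p : ℕ → Prop} (hp : REPred p)
    (hinf : {n | p n}.Infinite) : ∃ D ⊆ {n | p n}, D.Infinite ∧ ComputablePred (· ∈ D) := by
  obtain ⟨q, hq, hpq⟩ := hp.exists_primrec_stage
  -- `m` codes a stage `k` and an element `n > N` of `p` enumerated by stage `k`
  let P : ℕ → ℕ → Prop := fun N m => N < m.unpair.2 ∧ q m.unpair.1 m.unpair.2 = true
  have hex : ∀ N, ∃ m, P N m := fun N => by
    obtain ⟨n, hn, hNn⟩ := hinf.exists_gt N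
    obtain ⟨k, hk⟩ := (hpq n).1 hn
    exact ⟨Nat.pair k n, by simp [P, hNn, hk]⟩
  have hP : PrimrecPred fun x : ℕ × ℕ => P x.1 x.2 :=
    (Primrec.nat_lt.comp Primrec.fst (Primrec.snd.comp (Primrec.unpair.comp Primrec.snd))).and
      (Primrec.eq.comp (hq.comp (Primrec.fst.comp (Primrec.unpair.comp Primrec.snd))
        (Primrec.snd.comp (Primrec.unpair.comp Primrec.snd))) (Primrec.const true))
  exact exists_infinite_computablePred_subset_of_next
    ((Primrec.snd.comp Primrec.unpair).to_comp.comp (Computable.find hP.computablePred hex))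
    (fun N => (Nat.find_spec (hex N)).1) (fun N => (hpq _).2 ⟨_, (Nat.find_spec (hex N)).2⟩)

theorem not_biImmune_iff {A : ℕ → Bool} : ¬ BiImmune A ↔
    ∃ b, ∃ D : Set ℕ, D.Infinite ∧ ComputablePred (· ∈ D) ∧ D ⊆ {n | A n = b} := by
  simp only [BiImmune, not_not, Bool.exists_bool, ← exists_or]
  exact exists_congr fun _ => by rw [and_or_left, and_or_left, or_comm]

/-- `A` is bi-immune if and only if `A` does not extend a partial computable
function with infinite domain. -/
theorem biImmune_iff_no_partrec_extension (A : ℕ → Bool) :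
    BiImmune A ↔
      ¬ ∃ φ : ℕ →. Bool, Partrec φ ∧ φ.Dom.Infinite ∧ SeqExtends A φ := by
  rw [← not_iff_not, not_not, not_biImmune_iff]
  constructor
  · rintro ⟨b, D, hD, hDc, hDA⟩
    refine ⟨fun n => Part.assert (n ∈ D) fun _ => Part.some b, hDc.to_re.partrec_assert_const b,
      ?_, ?_⟩
    · simpa [PFun.Dom, Part.assert] using hD
    · intro n c hc
      obtain ⟨hn, hcb⟩ := Part.mem_assert_iff.1 hc
      rw [Part.mem_some_iff.1 hcb]
      exact hDA hn
  · rintro ⟨φ, hφ, hdom, hext⟩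
    obtain ⟨b, hb⟩ := PFun.exists_infinite_fiber hdom
    obtain ⟨D, hDb, hD, hDc⟩ := (hφ.rePred_mem b).exists_infinite_computablePred_subset hb
    exact ⟨b, D, hD, hDc, fun n hn => hext n b (hDb hn)⟩
end

section
/- Any path through a computable tree of bounded width is computable: let T : List Bool → Bool be a computable function such that the set {σ : T(σ) = true} is closed under taking prefixes, and suppose there is k ∈ ℕ such that for every n the number of strings σ of length n with T(σ) = true is at most k. Then every X : ℕ → Bool all of whose finite initial segments σ satisfy T(σ) = true is computable. -/
/-!
Call a node of `T` extendible if it has extensions in `T` of every length. By König's lemma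
every extendible node has an extendible child, so the number of extendible nodes of length `n`
is nondecreasing in `n`; being at most `k`, it is constant from some level `N` on. Above level
`N` the extendible nodes therefore do not branch: `X↾L` is the only extendible extension of
`X↾N` of length `L`. To compute `X n`, put `L = N + n + 1` and search for a height `m` at which
all extensions of `X↾N` of length `L` that still have extensions `m` levels higher agree at
position `n`. Such an `m` exists because every non-extendible node dies out at a finite height,
and the agreed value is `X n` because `X↾L` never dies out.
-/

section Computability

variable {α β σ : Type*} [Primcodable α] [Primcodable β] [Primcodable σ]

theorem Computable.list_map {f : α → List β} {g : α → β → σ} (hf : Computable f)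
    (hg : Computable₂ g) : Computable fun a => (f a).map (g a) := by
  let step (a : α) (j : ℕ) (acc : List σ) : List σ :=
    Option.casesOn (f a)[j]? acc fun b => acc ++ [g a b]
  have hstep : Computable₂ fun a (p : ℕ × List σ) => step a p.1 p.2 :=
    Computable.option_casesOn
      (Computable.list_getElem?.comp (hf.comp .fst) (Computable.fst.comp .snd))
      (Computable.snd.comp .snd)
      (Computable.list_concat.comp (Computable.snd.comp (Computable.snd.comp .fst))
        (hg.comp (Computable.fst.comp .fst) .snd))
  have hrec (a : α) (j : ℕ) :
      Nat.rec (motive := fun _ => List σ) [] (step a) j = ((f a).take j).map (g a) := by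
    induction j with
    | zero => simp
    | succ j ih =>
      rw [List.take_add_one]
      cases h : (f a)[j]? <;> simp [step, ih, h]
  refine (Computable.nat_rec (Computable.list_length.comp hf) (Computable.const []) hstep).of_eq
    fun a => ?_
  simp only [hrec, List.take_length]

theorem Computable.list_any {f : α → List β} {p : α → β → Bool} (hf : Computable f)
    (hp : Computable₂ p) : Computable fun a => (f a).any (p a) := by
  have hor : Primrec fun l : List Bool => l.any id :=
    (Primrec.list_foldr (h := fun (_ : List Bool) (p : Bool × Bool) => p.1 || p.2) .id
      (.const false) (Primrec.or.comp (Primrec.fst.comp .snd) (Primrec.snd.comp .snd)).to₂).of_eq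
      fun l => by induction l <;> simp_all
  exact (hor.to_comp.comp (hf.list_map hp)).of_eq fun a => by simp [List.any_map]

theorem Computable.of_eventually_refuted {X : α → Bool} {A : α → ℕ → Bool → Bool}
    (hA : Computable₂ fun a (mb : ℕ × Bool) => A a mb.1 mb.2) (hX : ∀ a m, A a m (X a) = true)
    (hrefuted : ∀ a, ∃ m, A a m (!X a) = false) : Computable X := by
  -- at a stage where the two values disagree, the one still possible is `X a`
  let decided (a : α) (m : ℕ) : Option Bool :=
    bif A a m true == A a m false then none else some (A a m true)
  have hdecided : Computable₂ decided :=
    Computable.cond (Primrec.beq.to_comp.comp (hA.comp .fst (.pair .snd (.const true)))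
      (hA.comp .fst (.pair .snd (.const false))))
      (Computable.const none)
      (Computable.option_some.comp (hA.comp .fst (.pair .snd (.const true))))
  have hcorrect (a : α) (m : ℕ) (b : Bool) (h : b ∈ decided a m) : b = X a := by
    have := hX a m
    cases hXa : X a <;> cases htrue : A a m true <;> cases hfalse : A a m false <;>
      simp_all [decided]
  refine (Partrec.rfindOpt hdecided).of_eq_tot fun a => ?_
  obtain ⟨m, hm⟩ := hrefuted a
  obtain ⟨b, hb⟩ := Part.dom_iff_mem.1 <| Nat.rfindOpt_dom (f := decided a) |>.2
    ⟨m, X a, by have := hX a m; cases hXa : X a <;> simp_all [decided]⟩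
  obtain ⟨m', hm'⟩ := Nat.rfindOpt_spec hb
  rwa [← hcorrect a m' b hm']

end Computability

namespace List

theorem ofFn_append_ofFn_add {α : Type*} (X : ℕ → α) (N j : ℕ) :
    (ofFn fun i : Fin N => X i) ++ (ofFn fun i : Fin j => X (N + i)) =
      ofFn fun i : Fin (N + j) => X i := by
  rw [ofFn_add]
  rfl

theorem getD_ofFn {α : Type*} (X : ℕ → α) {n L : ℕ} (hn : n < L) (d : α) :
    (ofFn fun i : Fin L => X i).getD n d = X n := by
  simp [hn]

end List

namespace BinaryTree

open Filter Set

def wordsOfLength : ℕ → List (List Bool)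
  | 0 => [[]]
  | n + 1 => (wordsOfLength n).flatMap fun τ => [false :: τ, true :: τ]

theorem mem_wordsOfLength {n : ℕ} {τ : List Bool} : τ ∈ wordsOfLength n ↔ τ.length = n := by
  induction n generalizing τ with
  | zero => simp [wordsOfLength]
  | succ n ih =>
    rcases τ with _ | ⟨b, τ⟩
    · simp [wordsOfLength]
    · cases b <;> simp [wordsOfLength, ih]

theorem primrec_wordsOfLength : Primrec wordsOfLength := by
  have hchildren : Primrec fun τ : List Bool => [false :: τ, true :: τ] :=
    Primrec.list_cons.comp (Primrec.list_cons.comp (.const false) .id)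
      (Primrec.list_cons.comp (Primrec.list_cons.comp (.const true) .id) (.const []))
  refine (Primrec.nat_rec₁ [[]] (Primrec.list_flatMap .snd (hchildren.comp .snd).to₂).to₂).of_eq
    fun n => ?_
  induction n with
  | zero => rfl
  | succ n ih => simp only [wordsOfLength, ← ih]

def IsPrefixClosed (T : List Bool → Bool) : Prop :=
  ∀ σ τ : List Bool, σ <+: τ → T τ = true → T σ = true

def HasExtension (T : List Bool → Bool) (τ : List Bool) (m : ℕ) : Prop :=
  ∃ ρ : List Bool, ρ.length = m ∧ T (τ ++ ρ) = true

def Extendible (T : List Bool → Bool) (τ : List Bool) : Prop :=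
  ∀ m, HasExtension T τ m

def extendibleLevel (T : List Bool → Bool) (n : ℕ) : Set (List Bool) :=
  {τ | τ.length = n ∧ Extendible T τ}

variable {T : List Bool → Bool} {σ τ : List Bool} {m n : ℕ}

theorem HasExtension.of_le (hT : IsPrefixClosed T) (h : HasExtension T τ n) (hmn : m ≤ n) :
    HasExtension T τ m := by
  obtain ⟨ρ, rfl, hρ⟩ := h
  exact ⟨ρ.take m, by simpa using hmn,
    hT _ _ ((List.prefix_append_right_inj τ).2 (List.take_prefix m ρ)) hρ⟩

theorem eventually_not_hasExtension (hT : IsPrefixClosed T) (h : ¬Extendible T τ) :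
    ∀ᶠ m in atTop, ¬HasExtension T τ m := by
  simp only [Extendible, not_forall] at h
  obtain ⟨m₀, hm₀⟩ := h
  exact eventually_atTop.2 ⟨m₀, fun m hm hext => hm₀ (hext.of_le hT hm)⟩

theorem Extendible.apply_eq_true (h : Extendible T τ) : T τ = true := by
  obtain ⟨ρ, hρ, hT⟩ := h 0
  rwa [List.length_eq_zero_iff.1 hρ, List.append_nil] at hT

theorem Extendible.of_prefix (hT : IsPrefixClosed T) (hστ : σ <+: τ) (h : Extendible T τ) :
    Extendible T σ := by
  obtain ⟨δ, rfl⟩ := hστ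
  intro m
  obtain ⟨ρ, hρ, hT'⟩ := h m
  exact HasExtension.of_le hT ⟨δ ++ ρ, rfl, by rwa [← List.append_assoc]⟩ (by simp [hρ])

/-- König's lemma, one level at a time. -/
theorem Extendible.exists_append_singleton (hT : IsPrefixClosed T) (h : Extendible T τ) :
    ∃ b, Extendible T (τ ++ [b]) := by
  by_contra! hnot
  obtain ⟨m, hm⟩ := ((eventually_not_hasExtension hT (hnot false)).and
    (eventually_not_hasExtension hT (hnot true))).exists
  obtain ⟨_ | ⟨b, ρ⟩, hρ, hTρ⟩ := h (m + 1)
  · simp at hρ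
  · have : HasExtension T (τ ++ [b]) m := ⟨ρ, by simpa using hρ, by simpa using hTρ⟩
    cases b
    · exact hm.1 this
    · exact hm.2 this

theorem Extendible.exists_append (hT : IsPrefixClosed T) (h : Extendible T τ) (j : ℕ) :
    ∃ ρ : List Bool, ρ.length = j ∧ Extendible T (τ ++ ρ) := by
  induction j with
  | zero => exact ⟨[], rfl, by simpa using h⟩
  | succ j ih =>
    obtain ⟨ρ, hρ, hext⟩ := ih
    obtain ⟨b, hb⟩ := hext.exists_append_singleton hT
    exact ⟨ρ ++ [b], by simp [hρ], by rwa [← List.append_assoc]⟩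

theorem finite_extendibleLevel (T : List Bool → Bool) (n : ℕ) :
    (extendibleLevel T n).Finite :=
  (List.finite_length_eq Bool n).subset fun _ hτ => hτ.1

theorem extendibleLevel_eq_image_take (hT : IsPrefixClosed T) (hnm : n ≤ m) :
    extendibleLevel T n = List.take n '' extendibleLevel T m := by
  ext σ
  constructor
  · rintro ⟨rfl, hσ⟩
    obtain ⟨ρ, hρ, hext⟩ := hσ.exists_append hT (m - σ.length)
    exact ⟨σ ++ ρ, ⟨by simp [hρ]; omega, hext⟩, List.take_left⟩
  · rintro ⟨τ, ⟨rfl, hτ⟩, rfl⟩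
    exact ⟨by simp [hnm], hτ.of_prefix hT (List.take_prefix _ _)⟩

theorem ncard_extendibleLevel_le {k : ℕ}
    (hwidth : ∀ n, Nat.card {σ : List Bool | σ.length = n ∧ T σ = true} ≤ k) (n : ℕ) :
    (extendibleLevel T n).ncard ≤ k := by
  calc (extendibleLevel T n).ncard
      ≤ {σ : List Bool | σ.length = n ∧ T σ = true}.ncard :=
        ncard_le_ncard (fun τ hτ => ⟨hτ.1, hτ.2.apply_eq_true⟩)
          ((List.finite_length_eq Bool n).subset fun _ hτ => hτ.1)
    _ = Nat.card {σ : List Bool | σ.length = n ∧ T σ = true} := (Nat.card_coe_set_eq _).symm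
    _ ≤ k := hwidth n

/-- Past the level `N` where the number of extendible nodes is maximal, distinct extendible
nodes never share their prefix of length `N`. -/
theorem exists_injOn_take_extendibleLevel (hT : IsPrefixClosed T) {k : ℕ}
    (hwidth : ∀ n, Nat.card {σ : List Bool | σ.length = n ∧ T σ = true} ≤ k) :
    ∃ N, ∀ L, N ≤ L → InjOn (List.take N) (extendibleLevel T L) := by
  have hrange : (range fun n => (extendibleLevel T n).ncard).Finite :=
    (finite_Iic k).subset (range_subset_iff.2 (ncard_extendibleLevel_le hwidth))
  obtain ⟨_, ⟨N, rfl⟩, hN⟩ := exists_max_image _ id hrange (range_nonempty _)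
  refine ⟨N, fun L hNL => injOn_of_ncard_image_eq
    (le_antisymm (ncard_image_le (finite_extendibleLevel T L)) ?_) (finite_extendibleLevel T L)⟩
  rw [← extendibleLevel_eq_image_take hT hNL]
  exact hN _ ⟨L, rfl⟩

def extendsBy (T : List Bool → Bool) (τ : List Bool) (m : ℕ) : Bool :=
  (wordsOfLength m).any fun ρ => T (τ ++ ρ)

theorem extendsBy_eq_true : extendsBy T τ m = true ↔ HasExtension T τ m := by
  simp [extendsBy, HasExtension, mem_wordsOfLength]

def candidate (T : List Bool → Bool) (σ : List Bool) (n m : ℕ) (b : Bool) : Bool :=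
  (wordsOfLength (n + 1)).any fun ρ => extendsBy T (σ ++ ρ) m && (σ ++ ρ).getD n false == b

theorem candidate_eq_true {b : Bool} : candidate T σ n m b = true ↔
    ∃ ρ : List Bool, ρ.length = n + 1 ∧ HasExtension T (σ ++ ρ) m ∧ (σ ++ ρ).getD n false = b := by
  simp [candidate, mem_wordsOfLength, extendsBy_eq_true]

theorem computable_candidate (hT : Computable T) (σ : List Bool) :
    Computable₂ fun n (mb : ℕ × Bool) => candidate T σ n mb.1 mb.2 := by
  have hextendsBy : Computable₂ (extendsBy T) :=
    Computable.list_any (primrec_wordsOfLength.to_comp.comp .snd)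
      (hT.comp (Computable.list_append.comp (Computable.fst.comp .fst) .snd))
  have hbit : Primrec₂ fun (p : ℕ × ℕ × Bool) ρ => (σ ++ ρ).getD p.1 false == p.2.2 :=
    Primrec.beq.comp ((Primrec.list_getD false).comp (Primrec.list_append.comp (.const σ) .snd)
      (Primrec.fst.comp .fst)) (Primrec.snd.comp (Primrec.snd.comp .fst))
  exact Computable.list_any (primrec_wordsOfLength.comp (Primrec.succ.comp .fst)).to_comp
    (Primrec.and.to_comp.comp (hextendsBy.comp (Computable.list_append.comp (.const σ) .snd)
      (Computable.fst.comp (Computable.snd.comp .fst))) hbit.to_comp)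

variable {X : ℕ → Bool}

theorem extendible_ofFn (hX : ∀ n, T (List.ofFn fun i : Fin n => X i) = true) (n : ℕ) :
    Extendible T (List.ofFn fun i : Fin n => X i) := fun m =>
  ⟨List.ofFn fun i : Fin m => X (n + i), List.length_ofFn,
    by rw [List.ofFn_append_ofFn_add]; exact hX _⟩

theorem candidate_apply_eq_true (hX : ∀ n, T (List.ofFn fun i : Fin n => X i) = true)
    (N n m : ℕ) : candidate T (List.ofFn fun i : Fin N => X i) n m (X n) = true := by
  rw [candidate_eq_true]
  refine ⟨List.ofFn fun i : Fin (n + 1) => X (N + i), List.length_ofFn, ?_, ?_⟩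
  · rw [List.ofFn_append_ofFn_add]
    exact extendible_ofFn hX _ m
  · rw [List.ofFn_append_ofFn_add]
    exact List.getD_ofFn X (by omega) false

theorem exists_candidate_eq_false (hT : IsPrefixClosed T)
    (hX : ∀ n, T (List.ofFn fun i : Fin n => X i) = true) {N n : ℕ}
    (hinj : InjOn (List.take N) (extendibleLevel T (N + (n + 1)))) :
    ∃ m, candidate T (List.ofFn fun i : Fin N => X i) n m (!X n) = false := by
  set σ := List.ofFn fun i : Fin N => X i
  have hσ : σ.length = N := List.length_ofFn
  have hwrong : ∀ ρ ∈ {ρ : List Bool | ρ.length = n + 1}, ∀ᶠ m in atTop,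
      (σ ++ ρ).getD n false = !X n → ¬HasExtension T (σ ++ ρ) m := by
    intro ρ hρ
    by_cases hext : Extendible T (σ ++ ρ)
    · have hpath : σ ++ ρ = List.ofFn fun i : Fin (N + (n + 1)) => X i :=
        hinj ⟨by simp [hσ, hρ.out], hext⟩ ⟨List.length_ofFn, extendible_ofFn hX _⟩
          (by rw [← List.ofFn_append_ofFn_add X N, List.take_left' hσ, List.take_left' hσ])
      refine Eventually.of_forall fun m hbit _ => ?_
      rw [hpath, List.getD_ofFn X (by omega)] at hbit
      simp at hbit
    · exact (eventually_not_hasExtension hT hext).mono fun m hm _ => hm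
  obtain ⟨m, hm⟩ := ((eventually_all_finite (List.finite_length_eq Bool (n + 1))).2 hwrong).exists
  refine ⟨m, Bool.eq_false_iff.2 fun h => ?_⟩
  obtain ⟨ρ, hρ, hext, hbit⟩ := candidate_eq_true.1 h
  exact hm ρ hρ hbit hext

end BinaryTree

/-- Any path through a computable tree of bounded width is computable. Here the tree
is given by a computable characteristic function `T : List Bool → Bool` which is
prefix-closed, and each level `n` contains at most `k` strings. -/
theorem path_of_bounded_width_tree_computable
    (T : List Bool → Bool) (hT : Computable T)
    (hprefix : ∀ σ τ : List Bool, σ <+: τ → T τ = true → T σ = true)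
    (k : ℕ) (hwidth : ∀ n, Nat.card {σ : List Bool | σ.length = n ∧ T σ = true} ≤ k)
    (X : ℕ → Bool) (hX : ∀ n, T (List.ofFn fun i : Fin n => X i) = true) :
    Computable X := by
  obtain ⟨N, hinj⟩ := BinaryTree.exists_injOn_take_extendibleLevel hprefix hwidth
  exact Computable.of_eventually_refuted (BinaryTree.computable_candidate hT _)
    (BinaryTree.candidate_apply_eq_true hX N)
    fun n => BinaryTree.exists_candidate_eq_false hprefix hX (hinj _ (by omega))
end
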